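/- arXiv:2310.01347 — 2 statements merged into one kernel-verified Lean document; each statement's English description precedes it below -/
import Mathlib

section
/- If a unit vector ψ ∈ ℂ^{2^n} is prepared by Clifford gates plus at most t Pauli-rotation gates, then the stabilizer dimension of ψ is at least n − t, i.e. log₂|stab(ψ)| ≥ n − t (equivalently |stab(ψ)| ≥ 2^{n−t}). -/
/-!
A stabilizer of a nonzero vector is a Pauli operator with square `1`, and two Pauli operators
commute or anticommute. The state `e₀` is stabilized by the `2 ^ n` strings of `Z`s and `I`s.
Conjugation by a Clifford gate `C` maps `stab ψ` injectively into `stab (C ψ)`. For a rotation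
`exp (iθP)`, the stabilizers of `ψ` commuting with `P` still stabilize `exp (iθP) ψ`, and they make
up at least half of `stab ψ`: multiplying by one anticommuting stabilizer maps the others
injectively onto commuting ones. So each rotation costs at most a factor `2`.
-/

open Matrix

noncomputable section

/-- The space of `n`-qubit operators (2^n × 2^n complex matrices, indexed by bit strings). -/
abbrev QMat (n : ℕ) := Matrix (Fin n → Fin 2) (Fin n → Fin 2) ℂ

/-- The space of `n`-qubit state vectors (ℂ^{2^n}, indexed by bit strings). -/
abbrev QVec (n : ℕ) := (Fin n → Fin 2) → ℂ

def PauliX : Matrix (Fin 2) (Fin 2) ℂ := !![0, 1; 1, 0]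
def PauliY : Matrix (Fin 2) (Fin 2) ℂ := !![0, -Complex.I; Complex.I, 0]
def PauliZ : Matrix (Fin 2) (Fin 2) ℂ := !![1, 0; 0, -1]

/-- `Q` is one of the four single-qubit Pauli matrices `I, X, Y, Z`. -/
def IsSingleQubitPauli (Q : Matrix (Fin 2) (Fin 2) ℂ) : Prop :=
  Q = 1 ∨ Q = PauliX ∨ Q = PauliY ∨ Q = PauliZ

/-- Kronecker product, in qubit order, of `n` single-qubit operators. -/
def tensorn (n : ℕ) (Q : Fin n → Matrix (Fin 2) (Fin 2) ℂ) : QMat n :=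
  fun x y => ∏ j, Q j (x j) (y j)

/-- `P` is an element of the `n`-qubit Pauli group: `P = i^ℓ · Q_1 ⊗ ⋯ ⊗ Q_n`. -/
def IsPauli {n : ℕ} (P : QMat n) : Prop :=
  ∃ (ℓ : Fin 4) (Q : Fin n → Matrix (Fin 2) (Fin 2) ℂ),
    (∀ j, IsSingleQubitPauli (Q j)) ∧ P = (Complex.I ^ (ℓ : ℕ)) • tensorn n Q

/-- Member of the `n`-qubit Clifford group: a unitary mapping Pauli operators to
Pauli operators under conjugation. -/
def IsClifford {n : ℕ} (U : QMat n) : Prop :=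
  U ∈ Matrix.unitaryGroup (Fin n → Fin 2) ℂ ∧ ∀ P : QMat n, IsPauli P → IsPauli (U * P * Uᴴ)

/-- A Pauli-rotation gate `exp(iθP)` with `θ ∈ ℝ` and `P` a Pauli operator. -/
def IsPauliRotation {n : ℕ} (R : QMat n) : Prop :=
  ∃ (θ : ℝ) (P : QMat n), IsPauli P ∧ R = NormedSpace.exp (((θ : ℂ) * Complex.I) • P)

/-- The first standard basis vector `e₀` of ℂ^{2^n} (the all-zeros bit string). -/
def e0 (n : ℕ) : QVec n := fun x => if x = (fun _ => 0) then 1 else 0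

/-- `ψ = C_s R_s ⋯ C_1 R_1 C_0 e₀` for some `s ≤ t`, where each `C_j` is Clifford and
each `R_j` is a Pauli-rotation gate: `ψ` is prepared by Clifford gates plus at most `t`
Pauli-rotation gates. -/
def PreparedBy {n : ℕ} (t : ℕ) (ψ : QVec n) : Prop :=
  ∃ s : ℕ, s ≤ t ∧ ∃ (C R : ℕ → QMat n) (v : ℕ → QVec n),
    (∀ j, j ≤ s → IsClifford (C j)) ∧
    (∀ j, 1 ≤ j → j ≤ s → IsPauliRotation (R j)) ∧
    v 0 = (C 0) *ᵥ (e0 n) ∧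
    (∀ j, j < s → v (j + 1) = (C (j + 1)) *ᵥ ((R (j + 1)) *ᵥ v j)) ∧
    ψ = v s

open Complex

lemma commute_mul_of_anticommute {R : Type*} [Ring R] {a b c : R} (ha : a * c = -(c * a))
    (hb : b * c = -(c * b)) : Commute (a * b) c := by
  rw [Commute, SemiconjBy, mul_assoc, hb, mul_neg, ← mul_assoc, ha, neg_mul, neg_neg, mul_assoc]

lemma Set.ncard_le_two_mul_ncard_inter_of_injOn {α : Type*} {s t : Set α} (hs : s.Finite)
    {f : α → α} (hf : Set.MapsTo f (s \ t) (s ∩ t)) (hinj : Set.InjOn f (s \ t)) :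
    s.ncard ≤ 2 * (s ∩ t).ncard := by
  have hdiff := Set.ncard_le_ncard_of_injOn f hf hinj (hs.inter_of_left t)
  have hsplit := Set.ncard_inter_add_ncard_sdiff_eq_ncard s t hs
  omega

lemma Nat.pow_sub_le_of_pow_le_pow_mul {b n s N : ℕ} (hb : 0 < b) (h : b ^ n ≤ b ^ s * N) :
    b ^ (n - s) ≤ N := by
  rcases le_total s n with hsn | hns
  · rw [← Nat.sub_add_cancel hsn, pow_add, mul_comm] at h
    exact Nat.le_of_mul_le_mul_left h (pow_pos hb s)
  · rw [Nat.sub_eq_zero_of_le hns, pow_zero, Nat.one_le_iff_ne_zero]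
    rintro rfl
    exact (pow_pos hb n).ne' (Nat.le_zero.mp h)

lemma Matrix.mulVec_ne_zero_of_isUnit {m R : Type*} [Fintype m] [DecidableEq m] [CommRing R]
    {A : Matrix m m R} (hA : IsUnit A) {v : m → R} (hv : v ≠ 0) : A *ᵥ v ≠ 0 :=
  fun h => hv (mulVec_injective_of_isUnit hA (by rw [h, mulVec_zero]))

def pauliMat : Fin 4 → Matrix (Fin 2) (Fin 2) ℂ := ![1, PauliX, PauliY, PauliZ]

/- The multiplication table of `I, X, Y, Z`:
`pauliMat k * pauliMat l = I ^ pauliMulPhase k l • pauliMat (k ^^^ l)`. -/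
def pauliMulPhase : Fin 4 → Fin 4 → ℕ :=
  ![![0, 0, 0, 0], ![0, 0, 1, 3], ![0, 3, 0, 1], ![0, 1, 3, 0]]

lemma isSingleQubitPauli_iff {Q : Matrix (Fin 2) (Fin 2) ℂ} :
    IsSingleQubitPauli Q ↔ ∃ k, pauliMat k = Q := by
  constructor
  · rintro (rfl | rfl | rfl | rfl)
    exacts [⟨0, rfl⟩, ⟨1, rfl⟩, ⟨2, rfl⟩, ⟨3, rfl⟩]
  · rintro ⟨k, rfl⟩
    fin_cases k <;> simp [pauliMat, IsSingleQubitPauli]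

lemma pauliMat_mul_pauliMat (k l : Fin 4) :
    pauliMat k * pauliMat l = I ^ pauliMulPhase k l • pauliMat (k ^^^ l) := by
  fin_cases k <;> fin_cases l <;>
    simp [pauliMat, pauliMulPhase, PauliX, PauliY, PauliZ, one_fin_two, smul_of]

namespace IsSingleQubitPauli

variable {Q P : Matrix (Fin 2) (Fin 2) ℂ}

lemma exists_mul_eq (hQ : IsSingleQubitPauli Q) (hP : IsSingleQubitPauli P) :
    ∃ (m : ℕ) (R : Matrix (Fin 2) (Fin 2) ℂ), IsSingleQubitPauli R ∧ Q * P = I ^ m • R := by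
  obtain ⟨k, rfl⟩ := isSingleQubitPauli_iff.mp hQ
  obtain ⟨l, rfl⟩ := isSingleQubitPauli_iff.mp hP
  exact ⟨_, _, isSingleQubitPauli_iff.mpr ⟨_, rfl⟩, pauliMat_mul_pauliMat k l⟩

lemma mul_self (hQ : IsSingleQubitPauli Q) : Q * Q = 1 := by
  obtain ⟨k, rfl⟩ := isSingleQubitPauli_iff.mp hQ
  rw [pauliMat_mul_pauliMat]
  fin_cases k <;> simp [pauliMulPhase, pauliMat]

lemma exists_mul_eq_neg_one_pow_smul (hQ : IsSingleQubitPauli Q) (hP : IsSingleQubitPauli P) :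
    ∃ m : ℕ, Q * P = (-1 : ℂ) ^ m • (P * Q) := by
  obtain ⟨k, rfl⟩ := isSingleQubitPauli_iff.mp hQ
  obtain ⟨l, rfl⟩ := isSingleQubitPauli_iff.mp hP
  simp only [pauliMat_mul_pauliMat, smul_smul]
  fin_cases k <;> fin_cases l <;>
    first
    | (use 0; simp [pauliMulPhase]; done)
    | (use 1; simp [pauliMulPhase, pow_succ])

end IsSingleQubitPauli

section PauliGroup

variable {n : ℕ}

lemma tensorn_mul (A B : Fin n → Matrix (Fin 2) (Fin 2) ℂ) :
    tensorn n A * tensorn n B = tensorn n (fun j => A j * B j) := by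
  ext x y
  simp only [tensorn, mul_apply, Finset.prod_univ_sum, Fintype.piFinset_univ,
    Finset.prod_mul_distrib]

lemma tensorn_smul (c : Fin n → ℂ) (A : Fin n → Matrix (Fin 2) (Fin 2) ℂ) :
    tensorn n (fun j => c j • A j) = (∏ j, c j) • tensorn n A := by
  ext x y
  simp [tensorn, Finset.prod_mul_distrib]

lemma tensorn_one : tensorn n (fun _ => 1) = 1 := by
  ext x y
  by_cases h : x = y
  · subst h
    simp [tensorn]
  · obtain ⟨j, hj⟩ := Function.ne_iff.mp h
    rw [tensorn, one_apply_ne h]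
    exact Finset.prod_eq_zero (Finset.mem_univ j) (one_apply_ne hj)

lemma pow_smul_tensorn_mul (a b : ℕ) (A B : Fin n → Matrix (Fin 2) (Fin 2) ℂ) :
    (I ^ a • tensorn n A) * (I ^ b • tensorn n B) =
      I ^ (a + b) • tensorn n (fun j => A j * B j) := by
  rw [smul_mul_smul_comm, tensorn_mul, pow_add]

lemma isPauli_pow_smul_tensorn (m : ℕ) {Q : Fin n → Matrix (Fin 2) (Fin 2) ℂ}
    (hQ : ∀ j, IsSingleQubitPauli (Q j)) : IsPauli (I ^ m • tensorn n Q) :=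
  ⟨⟨m % 4, Nat.mod_lt m four_pos⟩, Q, hQ, by rw [I_pow_eq_pow_mod m]⟩

lemma finite_setOf_isPauli (n : ℕ) : {P : QMat n | IsPauli P}.Finite := by
  refine (Set.finite_range fun p : Fin 4 × (Fin n → Fin 4) =>
    I ^ (p.1 : ℕ) • tensorn n (pauliMat ∘ p.2)).subset ?_
  rintro P ⟨ℓ, Q, hQ, rfl⟩
  choose k hk using fun j => isSingleQubitPauli_iff.mp (hQ j)
  exact ⟨(ℓ, k), by simp [Function.comp_def, hk]⟩

namespace IsPauli

variable {P P' : QMat n}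

lemma one : IsPauli (1 : QMat n) := by
  simpa [tensorn_one] using isPauli_pow_smul_tensorn 0 fun (_ : Fin n) => Or.inl rfl

lemma mul (hP : IsPauli P) (hP' : IsPauli P') : IsPauli (P * P') := by
  obtain ⟨a, A, hA, rfl⟩ := hP
  obtain ⟨b, B, hB, rfl⟩ := hP'
  choose m R hR hAB using fun j => (hA j).exists_mul_eq (hB j)
  rw [pow_smul_tensorn_mul, funext hAB, tensorn_smul, smul_smul, Finset.prod_pow_eq_pow_sum,
    ← pow_add]
  exact isPauli_pow_smul_tensorn _ hR

lemma mul_self (hP : IsPauli P) : P * P = 1 ∨ P * P = -1 := by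
  obtain ⟨a, A, hA, rfl⟩ := hP
  rw [pow_smul_tensorn_mul, funext fun j => (hA j).mul_self, tensorn_one, ← two_mul, pow_mul,
    I_sq]
  rcases neg_one_pow_eq_or ℂ a with h | h <;> simp [h]

lemma exists_mul_eq_neg_one_pow_smul (hP : IsPauli P) (hP' : IsPauli P') :
    ∃ m : ℕ, P * P' = (-1 : ℂ) ^ m • (P' * P) := by
  obtain ⟨a, A, hA, rfl⟩ := hP
  obtain ⟨b, B, hB, rfl⟩ := hP'
  choose m hAB using fun j => (hA j).exists_mul_eq_neg_one_pow_smul (hB j)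
  refine ⟨∑ j, m j, ?_⟩
  rw [pow_smul_tensorn_mul, pow_smul_tensorn_mul, funext hAB, tensorn_smul,
    Finset.prod_pow_eq_pow_sum, add_comm (b : ℕ), smul_comm]

lemma commute_or_anticommute (hP : IsPauli P) (hP' : IsPauli P') :
    Commute P P' ∨ P * P' = -(P' * P) := by
  obtain ⟨m, h⟩ := hP.exists_mul_eq_neg_one_pow_smul hP'
  rcases neg_one_pow_eq_or ℂ m with hm | hm <;> simp [h, hm, Commute, SemiconjBy]

end IsPauli

end PauliGroup

section Stabilizer

variable {n : ℕ}

def stab (ψ : QVec n) : Set (QMat n) := {P | IsPauli P ∧ P *ᵥ ψ = ψ}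

lemma stab_finite (ψ : QVec n) : (stab ψ).Finite :=
  (finite_setOf_isPauli n).subset fun _ h => h.1

lemma mul_mem_stab {ψ : QVec n} {P Q : QMat n} (hP : P ∈ stab ψ) (hQ : Q ∈ stab ψ) :
    P * Q ∈ stab ψ :=
  ⟨hP.1.mul hQ.1, by rw [← mulVec_mulVec, hQ.2, hP.2]⟩

lemma mul_self_eq_one_of_mem_stab {ψ : QVec n} (hψ : ψ ≠ 0) {P : QMat n} (hP : P ∈ stab ψ) :
    P * P = 1 := by
  refine hP.1.mul_self.resolve_right fun h => hψ (self_eq_neg.mp ?_)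
  calc ψ = (P * P) *ᵥ ψ := by rw [← mulVec_mulVec, hP.2, hP.2]
    _ = -ψ := by rw [h, neg_mulVec, one_mulVec]

lemma ncard_stab_le_two_mul_ncard_commute {ψ : QVec n} (hψ : ψ ≠ 0) {P : QMat n}
    (hP : IsPauli P) : (stab ψ).ncard ≤ 2 * (stab ψ ∩ {Q | Commute Q P}).ncard := by
  rcases (stab ψ \ {Q | Commute Q P}).eq_empty_or_nonempty with h | ⟨Q₀, hQ₀, hQ₀P⟩
  · exact Set.ncard_le_two_mul_ncard_inter_of_injOn (f := id) (stab_finite ψ)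
      (h ▸ Set.mapsTo_empty _ _) (h ▸ Set.injOn_empty _)
  have anticomm : ∀ Q ∈ stab ψ, ¬Commute Q P → Q * P = -(P * Q) :=
    fun Q hQ hQP => (hQ.1.commute_or_anticommute hP).resolve_left hQP
  refine Set.ncard_le_two_mul_ncard_inter_of_injOn (f := (Q₀ * ·)) (stab_finite ψ) ?_ ?_
  · rintro Q ⟨hQ, hQP⟩
    exact ⟨mul_mem_stab hQ₀ hQ,
      commute_mul_of_anticommute (anticomm Q₀ hQ₀ hQ₀P) (anticomm Q hQ hQP)⟩
  · exact fun Q _ Q' _ h =>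
      (IsUnit.of_mul_eq_one _ (mul_self_eq_one_of_mem_stab hψ hQ₀)).mul_left_cancel h

end Stabilizer

section Gates

variable {n : ℕ} {C R : QMat n}

lemma IsClifford.isUnit (hC : IsClifford C) : IsUnit C :=
  IsUnit.of_mul_eq_one _ hC.1.2

lemma IsClifford.ncard_stab_le (hC : IsClifford C) (ψ : QVec n) :
    (stab ψ).ncard ≤ (stab (C *ᵥ ψ)).ncard := by
  have hCC : Cᴴ * C = 1 := hC.1.1
  refine Set.ncard_le_ncard_of_injOn (fun Q => C * Q * Cᴴ) ?_ ?_ (stab_finite _)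
  · rintro Q ⟨hQ, hQψ⟩
    refine ⟨hC.2 Q hQ, ?_⟩
    rw [mulVec_mulVec, mul_assoc, mul_assoc, hCC, mul_one, ← mulVec_mulVec, hQψ]
  · exact fun Q _ Q' _ h =>
      hC.isUnit.mul_left_cancel ((IsUnit.of_mul_eq_one _ hCC).mul_right_cancel h)

lemma IsPauliRotation.isUnit (hR : IsPauliRotation R) : IsUnit R := by
  obtain ⟨θ, P, -, rfl⟩ := hR
  exact Matrix.isUnit_exp _

lemma IsPauliRotation.ncard_stab_le (hR : IsPauliRotation R) {ψ : QVec n} (hψ : ψ ≠ 0) :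
    (stab ψ).ncard ≤ 2 * (stab (R *ᵥ ψ)).ncard := by
  obtain ⟨θ, P, hP, rfl⟩ := hR
  refine (ncard_stab_le_two_mul_ncard_commute hψ hP).trans
    (Nat.mul_le_mul_left 2 (Set.ncard_le_ncard ?_ (stab_finite _)))
  rintro Q ⟨⟨hQ, hQψ⟩, hQP⟩
  refine ⟨hQ, ?_⟩
  rw [mulVec_mulVec, ((hQP.smul_right _).exp_right).eq, ← mulVec_mulVec, hQψ]

end Gates

section InitialState

variable {n : ℕ}

def zString (z : Fin n → Bool) : QMat n :=
  tensorn n fun j => if z j then PauliZ else 1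

lemma mulVec_e0 (A : QMat n) : A *ᵥ e0 n = fun x => A x 0 := by
  ext x
  simp [mulVec, dotProduct, e0, Pi.zero_def]

lemma zString_mem_stab_e0 (z : Fin n → Bool) : zString z ∈ stab (e0 n) := by
  have hZ : ∀ j, IsSingleQubitPauli (if z j then PauliZ else 1) := fun j => by
    split_ifs <;> simp [IsSingleQubitPauli]
  refine ⟨by simpa [zString] using isPauli_pow_smul_tensorn 0 hZ, ?_⟩
  -- `Z` and `I` have the same first column
  have hcol : ∀ j a, (if z j then PauliZ else 1) a 0 = (1 : Matrix (Fin 2) (Fin 2) ℂ) a 0 := by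
    intro j a
    split_ifs <;> fin_cases a <;> simp [PauliZ, one_fin_two]
  conv_rhs => rw [← one_mulVec (e0 n), ← tensorn_one]
  simp only [mulVec_e0, zString, tensorn]
  exact funext fun x => Finset.prod_congr rfl fun j _ => hcol j (x j)

lemma zString_apply_single (z : Fin n → Bool) (j : Fin n) :
    zString z (Pi.single j 1) (Pi.single j 1) = if z j then -1 else 1 := by
  rw [zString, tensorn, Finset.prod_eq_single j]
  · split_ifs <;> simp [PauliZ]
  · intro k _ hk
    split_ifs <;> simp [PauliZ, hk]
  · simp

lemma zString_injective : Function.Injective (zString (n := n)) := by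
  intro z z' h
  funext j
  have hj := congrFun (congrFun h (Pi.single j 1)) (Pi.single j 1)
  rw [zString_apply_single, zString_apply_single] at hj
  revert hj
  cases z j <;> cases z' j <;> norm_num

lemma two_pow_le_ncard_stab_e0 (n : ℕ) : 2 ^ n ≤ (stab (e0 n)).ncard :=
  calc 2 ^ n = (Set.univ : Set (Fin n → Bool)).ncard := by simp [Set.ncard_univ]
    _ ≤ (stab (e0 n)).ncard :=
      Set.ncard_le_ncard_of_injOn zString (fun z _ => zString_mem_stab_e0 z)
        zString_injective.injOn (stab_finite _)

lemma e0_ne_zero (n : ℕ) : e0 n ≠ 0 :=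
  fun h => by simpa [e0] using congrFun h fun _ => 0

end InitialState

theorem stab_dim_lower_bound_general (n t : ℕ) (ψ : QVec n)
    (hprep : PreparedBy t ψ) :
    2 ^ (n - t) ≤ Nat.card {P : QMat n // IsPauli P ∧ P *ᵥ ψ = ψ} := by
  obtain ⟨s, hst, C, R, v, hC, hR, hv₀, hv, rfl⟩ := hprep
  have key : ∀ j ≤ s, v j ≠ 0 ∧ 2 ^ n ≤ 2 ^ j * (stab (v j)).ncard := by
    intro j hj
    induction j with
    | zero =>
      rw [hv₀, pow_zero, one_mul]
      exact ⟨mulVec_ne_zero_of_isUnit (hC 0 hj).isUnit (e0_ne_zero n),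
        (two_pow_le_ncard_stab_e0 n).trans ((hC 0 hj).ncard_stab_le _)⟩
    | succ j ih =>
      obtain ⟨hvj, hN⟩ := ih (by omega)
      have hRj := hR (j + 1) (by omega) hj
      rw [hv j (by omega)]
      refine ⟨mulVec_ne_zero_of_isUnit (hC _ hj).isUnit (mulVec_ne_zero_of_isUnit hRj.isUnit hvj),
        hN.trans ?_⟩
      rw [pow_succ, mul_assoc]
      exact Nat.mul_le_mul_left _
        ((hRj.ncard_stab_le hvj).trans (Nat.mul_le_mul_left 2 ((hC _ hj).ncard_stab_le _)))
  calc 2 ^ (n - t) ≤ 2 ^ (n - s) := Nat.pow_le_pow_right two_pos (Nat.sub_le_sub_left hst n)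
    _ ≤ (stab (v s)).ncard := Nat.pow_sub_le_of_pow_le_pow_mul two_pos (key s le_rfl).2
    _ = Nat.card {P : QMat n // IsPauli P ∧ P *ᵥ v s = v s} := (Nat.card_coe_set_eq _).symm

/-- stabilizer-dimension bound: a state prepared by Clifford gates plus
at most `t` Pauli-rotation gates has stabilizer dimension at least `n - t`,
i.e. `|stab(ψ)| ≥ 2^{n-t}`. -/
theorem stab_dim_lower_bound (n t : ℕ) (ψ : QVec n) (hunit : star ψ ⬝ᵥ ψ = 1)
    (hprep : PreparedBy t ψ) :
    2 ^ (n - t) ≤ Nat.card {P : QMat n // IsPauli P ∧ P *ᵥ ψ = ψ} :=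
  stab_dim_lower_bound_general n t ψ hprep
end
end

section
/- Let W ⊆ F_2^{2n} be an isotropic subspace with respect to the standard symplectic form ω, and let A_1, …, A_p be pairwise disjoint subsets of [n] whose union is [n]. Then there exist subspaces W_1, …, W_p ⊆ W such that for each i the subspace ρ_{A_i}(W_i) is a maximal isotropic subspace of ρ_{A_i}(W) (isotropic for ω and not strictly contained in any isotropic subspace of ρ_{A_i}(W)), and dim W ≤ Σ_{i=1}^p dim ρ_{A_i}(W_i). -/
/-! Since the `A_i` partition `[n]`, the local views assemble into an injective linear map
`Φ = (ρ_{A_i})_i` into `(F₂^{2n})^p` that carries `ω` to the diagonal form `Σ_i ω`, so `Φ(W)` is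
isotropic and lies in `∏_i ρ_{A_i}(W)`. Choose `M_i` maximal isotropic in `ρ_{A_i}(W)` and put
`W_i = W ∩ ρ_{A_i}⁻¹(M_i)`, so that `ρ_{A_i}(W_i) = M_i`. Every vector of `∏_i ρ_{A_i}(W)`
orthogonal to `∏_i M_i` lies in `∏_i M_i`, and an isotropic `L` whose vectors orthogonal to a
subspace `M` all lie in `M` has `dim L ≤ dim M`: from `L + M^⊥ ⊆ (L ∩ M)^⊥` and
`dim N + dim N^⊥ = dim V + dim (N ∩ rad)`. Hence `dim W = dim Φ(W) ≤ Σ_i dim M_i`. -/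

open Matrix

noncomputable section

/-- `F₂^{2n}`, presented as pairs `(x₁, x₂)` of vectors in `F₂^n`. -/
abbrev Vn (n : ℕ) := (Fin n → ZMod 2) × (Fin n → ZMod 2)

/-- The standard symplectic form on `F₂^{2n}`: `ω(x,y) = x₁ᵀy₂ + x₂ᵀy₁`. -/
def sympOmega (n : ℕ) (x y : Vn n) : ZMod 2 :=
  (∑ i, x.1 i * y.2 i) + ∑ i, x.2 i * y.1 i

/-- The projection `ρ_A`, zeroing out every coordinate with index outside
`A ∪ {n + a : a ∈ A}` and leaving the rest unchanged. -/
def maskLin {n : ℕ} (A : Finset (Fin n)) : Vn n →ₗ[ZMod 2] Vn n where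
  toFun x := (fun j => if j ∈ A then x.1 j else 0, fun j => if j ∈ A then x.2 j else 0)
  map_add' x y := by
    refine Prod.ext ?_ ?_ <;> funext j <;> by_cases h : j ∈ A <;> simp [h]
  map_smul' c x := by
    refine Prod.ext ?_ ?_ <;> funext j <;> by_cases h : j ∈ A <;> simp [h]

open Module
open LinearMap (BilinForm)

namespace LinearMap.BilinForm

variable {K V : Type*} [Field K] [AddCommGroup V] [Module K V]

theorem finrank_le_of_le_orthogonal_of_inf_orthogonal_le [FiniteDimensional K V]
    (B : BilinForm K V) {L M : Submodule K V} (hL : L ≤ B.orthogonal L)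
    (hLM : L ⊓ B.orthogonal M ≤ M) : finrank K L ≤ finrank K M := by
  have hsup : L ⊔ B.orthogonal M ≤ B.orthogonal (L ⊓ M) :=
    sup_le (fun l hl x hx => hL hl x hx.1) (B.orthogonal_le inf_le_right)
  have hinf : L ⊓ B.orthogonal M ≤ L ⊓ M := le_inf inf_le_left hLM
  have hker : L ⊓ M ⊓ LinearMap.ker B ≤ M ⊓ LinearMap.ker B := inf_le_inf_right _ inf_le_right
  have := Submodule.finrank_sup_add_finrank_inf_eq L (B.orthogonal M)
  have := Submodule.finrank_mono hsup
  have := Submodule.finrank_mono hinf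
  have := Submodule.finrank_mono hker
  have := B.finrank_add_finrank_orthogonal' M
  have := B.finrank_add_finrank_orthogonal' (L ⊓ M)
  omega

theorem IsAlt.exists_le_orthogonal_inf_orthogonal_le [FiniteDimensional K V]
    {B : BilinForm K V} (hB : B.IsAlt) (V₀ : Submodule K V) :
    ∃ M ≤ V₀, M ≤ B.orthogonal M ∧ V₀ ⊓ B.orthogonal M ≤ M := by
  obtain ⟨M, ⟨hMV₀, hM⟩, hmax⟩ := wellFounded_gt.has_min
    {M : Submodule K V | M ≤ V₀ ∧ M ≤ B.orthogonal M} ⟨⊥, bot_le, bot_le⟩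
  refine ⟨M, hMV₀, hM, fun v ⟨hv, hvM⟩ => ?_⟩
  have hiso : M ⊔ K ∙ v ≤ B.orthogonal (M ⊔ K ∙ v) := by
    intro x hx y hy
    obtain ⟨m, hm, _, hcv, rfl⟩ := Submodule.mem_sup.1 hx
    obtain ⟨m', hm', _, hdv, rfl⟩ := Submodule.mem_sup.1 hy
    obtain ⟨c, rfl⟩ := Submodule.mem_span_singleton.1 hcv
    obtain ⟨d, rfl⟩ := Submodule.mem_span_singleton.1 hdv
    have hvm : B v m = 0 := hB.eq_iff.1 (hvM m hm)
    simp [hM hm m' hm', hvM m' hm', hvm, hB v]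
  have hle : M ⊔ K ∙ v ≤ V₀ := sup_le hMV₀ ((Submodule.span_singleton_le_iff_mem v V₀).2 hv)
  rw [eq_of_le_of_not_lt le_sup_left (hmax _ ⟨hle, hiso⟩)]
  exact Submodule.mem_sup_right (Submodule.mem_span_singleton_self v)

variable {R ι : Type*} [CommSemiring R] [Fintype ι] {Mᵢ : ι → Type*}
  [∀ i, AddCommMonoid (Mᵢ i)] [∀ i, Module R (Mᵢ i)]

def pi (B : ∀ i, BilinForm R (Mᵢ i)) : BilinForm R (∀ i, Mᵢ i) :=
  ∑ i, (B i).compl₁₂ (LinearMap.proj i) (LinearMap.proj i)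

@[simp]
theorem pi_apply (B : ∀ i, BilinForm R (Mᵢ i)) (f g : ∀ i, Mᵢ i) :
    pi B f g = ∑ i, B i (f i) (g i) := by
  simp [pi]

theorem pi_inf_orthogonal_pi_le [DecidableEq ι] (B : ∀ i, BilinForm R (Mᵢ i))
    {V₀ M : ∀ i, Submodule R (Mᵢ i)} (h : ∀ i, V₀ i ⊓ (B i).orthogonal (M i) ≤ M i) :
    Submodule.pi Set.univ V₀ ⊓ (pi B).orthogonal (Submodule.pi Set.univ M) ≤
      Submodule.pi Set.univ M := by
  rintro f ⟨hfV₀, hfM⟩ i -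
  refine h i ⟨hfV₀ i trivial, fun m hm => ?_⟩
  have hsingle : Pi.single i m ∈ Submodule.pi Set.univ M := Submodule.le_comap_single_pi M hm
  have hsum := hfM _ hsingle
  rwa [pi_apply, Fintype.sum_eq_single i fun j hj => by simp [Pi.single_eq_of_ne hj],
    Pi.single_eq_same] at hsum

end LinearMap.BilinForm

theorem Submodule.finrank_pi_univ {K ι : Type*} [Field K] [Fintype ι] {Vᵢ : ι → Type*}
    [∀ i, AddCommGroup (Vᵢ i)] [∀ i, Module K (Vᵢ i)] [∀ i, FiniteDimensional K (Vᵢ i)]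
    (p : ∀ i, Submodule K (Vᵢ i)) :
    finrank K (Submodule.pi Set.univ p) = ∑ i, finrank K (p i) := by
  let e : Submodule.pi Set.univ p ≃ₗ[K] ∀ i, p i :=
    { toFun f i := ⟨f.1 i, f.2 i (Set.mem_univ i)⟩
      invFun g := ⟨fun i => g i, fun i _ => (g i).2⟩
      map_add' _ _ := rfl
      map_smul' _ _ := rfl
      left_inv _ := rfl
      right_inv _ := rfl }
  rw [e.finrank_eq, Module.finrank_pi_fintype]

section Symplectic

variable {n : ℕ}

def sympForm (n : ℕ) : BilinForm (ZMod 2) (Vn n) :=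
  (dotProductBilin (ZMod 2) (ZMod 2)).compl₁₂ (.fst _ _ _) (.snd _ _ _) +
    (dotProductBilin (ZMod 2) (ZMod 2)).compl₁₂ (.snd _ _ _) (.fst _ _ _)

theorem sympForm_apply (x y : Vn n) : sympForm n x y = sympOmega n x y := rfl

theorem isAlt_sympForm : (sympForm n).IsAlt := fun x => by
  rw [sympForm_apply, sympOmega, Finset.sum_congr rfl fun i _ => mul_comm (x.2 i) (x.1 i),
    CharTwo.add_self_eq_zero]

theorem sympOmega_maskLin (A : Finset (Fin n)) (x y : Vn n) :
    sympOmega n (maskLin A x) (maskLin A y) = ∑ j ∈ A, (x.1 j * y.2 j + x.2 j * y.1 j) := by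
  rw [sympOmega, ← Finset.sum_add_distrib, ← Finset.univ_inter A, ← Finset.sum_ite_mem]
  refine Finset.sum_congr rfl fun j _ => ?_
  by_cases hj : j ∈ A <;> simp [maskLin, hj]

variable {p : ℕ} {A : Fin p → Finset (Fin n)}

theorem sum_sympOmega_maskLin (hdisj : ∀ i j, i ≠ j → Disjoint (A i) (A j))
    (hcover : ∀ x : Fin n, ∃ i, x ∈ A i) (x y : Vn n) :
    ∑ i, sympOmega n (maskLin (A i) x) (maskLin (A i) y) = sympOmega n x y := by
  have hunion : Finset.univ.biUnion A = Finset.univ :=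
    Finset.eq_univ_of_forall fun j => Finset.mem_biUnion.2 (by simpa using hcover j)
  simp only [sympOmega_maskLin]
  rw [← Finset.sum_biUnion fun i _ j _ hij => hdisj i j hij, hunion, sympOmega,
    Finset.sum_add_distrib]

theorem injective_pi_maskLin (hcover : ∀ x : Fin n, ∃ i, x ∈ A i) :
    Function.Injective (LinearMap.pi fun i => maskLin (A i)) := by
  intro x y hxy
  have hi : ∀ i, maskLin (A i) x = maskLin (A i) y := congr_fun hxy
  ext j <;> obtain ⟨i, hji⟩ := hcover j
  · simpa [maskLin, hji] using congr_fun (congr_arg Prod.fst (hi i)) j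
  · simpa [maskLin, hji] using congr_fun (congr_arg Prod.snd (hi i)) j

end Symplectic

/-- for an isotropic `W ⊆ F₂^{2n}` and a disjoint covering
`A_1, …, A_p` of `[n]`, there are subspaces `W_i ⊆ W` whose local views `ρ_{A_i}(W_i)`
are maximal isotropic subspaces of `ρ_{A_i}(W)`, with
`dim W ≤ Σ_i dim ρ_{A_i}(W_i)`. -/
theorem isotropic_dim_le_sum_local_views (n p : ℕ) (W : Submodule (ZMod 2) (Vn n))
    (hW : ∀ u ∈ W, ∀ v ∈ W, sympOmega n u v = 0)
    (A : Fin p → Finset (Fin n))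
    (hdisj : ∀ i j, i ≠ j → Disjoint (A i) (A j))
    (hcover : ∀ x : Fin n, ∃ i, x ∈ A i) :
    ∃ Ws : Fin p → Submodule (ZMod 2) (Vn n),
      (∀ i, Ws i ≤ W) ∧
      (∀ i,
        (∀ u ∈ (Ws i).map (maskLin (A i)), ∀ v ∈ (Ws i).map (maskLin (A i)),
          sympOmega n u v = 0) ∧
        (Ws i).map (maskLin (A i)) ≤ W.map (maskLin (A i)) ∧
        (∀ U : Submodule (ZMod 2) (Vn n), U ≤ W.map (maskLin (A i)) →
          (∀ u ∈ U, ∀ v ∈ U, sympOmega n u v = 0) →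
          (Ws i).map (maskLin (A i)) ≤ U → U = (Ws i).map (maskLin (A i)))) ∧
      Module.finrank (ZMod 2) ↥W ≤
        ∑ i, Module.finrank (ZMod 2) ↥((Ws i).map (maskLin (A i))) := by
  choose M hMW hMiso hMmax using fun i =>
    isAlt_sympForm.exists_le_orthogonal_inf_orthogonal_le (W.map (maskLin (A i)))
  have hmap i : (W ⊓ (M i).comap (maskLin (A i))).map (maskLin (A i)) = M i := by
    rw [← Submodule.map_inf_eq_map_inf_comap, inf_eq_right.2 (hMW i)]
  refine ⟨fun i => W ⊓ (M i).comap (maskLin (A i)), fun i => inf_le_left, fun i => ?_, ?_⟩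
  · rw [hmap i]
    refine ⟨fun u hu v hv => hMiso i hv u hu, hMW i, fun U hUW hUiso hMU => ?_⟩
    exact le_antisymm (fun u hu => hMmax i ⟨hUW hu, fun m hm => hUiso m (hMU hm) u hu⟩) hMU
  set Φ := LinearMap.pi fun i => maskLin (A i)
  have hiso : W.map Φ ≤ (BilinForm.pi fun _ => sympForm n).orthogonal (W.map Φ) := by
    rintro _ ⟨y, hy, rfl⟩ _ ⟨x, hx, rfl⟩
    simpa [Φ, sympForm_apply, sum_sympOmega_maskLin hdisj hcover] using hW x hx y hy
  have hW_le : W.map Φ ≤ Submodule.pi Set.univ fun i => W.map (maskLin (A i)) :=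
    fun _ ⟨x, hx, hΦx⟩ i _ => ⟨x, hx, by rw [← hΦx]; rfl⟩
  calc finrank (ZMod 2) W = finrank (ZMod 2) (W.map Φ) :=
        (Submodule.equivMapOfInjective Φ (injective_pi_maskLin hcover) W).finrank_eq
    _ ≤ finrank (ZMod 2) (Submodule.pi Set.univ M) :=
        BilinForm.finrank_le_of_le_orthogonal_of_inf_orthogonal_le _ hiso
          (le_trans (inf_le_inf_right _ hW_le) (BilinForm.pi_inf_orthogonal_pi_le _ hMmax))
    _ = ∑ i, finrank (ZMod 2) (M i) := Submodule.finrank_pi_univ M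
    _ = _ := Finset.sum_congr rfl fun i _ => by rw [hmap i]
end
end
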